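/- arXiv:1007.2685 — 5 statements merged into one kernel-verified Lean document; each statement's English description precedes it below -/
import Mathlib

section
/- Every finite set A of natural numbers contains a sum-free subset S with |S| ≥ |A|/3. -/
/-!
Erdős's argument. Take a prime `p = 3k + 2` exceeding every element of `A`. In `ZMod p` the
middle third `{k + 1, …, 2k + 1}` is sum-free and has `k + 1 > p / 3` elements. For `a ≠ 0`,
the dilate `t * a` lands in it for exactly `k + 1` values of `t`, so on average over `t` at
least a third of `A` is sent into the middle third; the elements sent there by the best `t`
form a sum-free subset of `A`, since `x + y = z` in `ℕ` would give `t x + t y = t z`.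
-/

def SumFree (S : Finset ℕ) : Prop := ∀ x ∈ S, ∀ y ∈ S, ∀ z ∈ S, x + y ≠ z

open Finset

section Dilation

variable {G₀ : Type*} [GroupWithZero G₀] [Fintype G₀] [DecidableEq G₀]

theorem card_filter_mul_mem {a : G₀} (ha : a ≠ 0) (B : Finset G₀) :
    #{t | t * a ∈ B} = #B :=
  card_equiv (Equiv.mulRight₀ a ha) fun t => by simp

theorem exists_mul_card_le_card_filter_mul_mem {ι : Type*} (A : Finset ι) (g : ι → G₀)
    (hg : ∀ a ∈ A, g a ≠ 0) (B : Finset G₀) :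
    ∃ t, #A * #B ≤ #{a ∈ A | t * g a ∈ B} * Fintype.card G₀ := by
  have hcount : ∑ t, #{a ∈ A | t * g a ∈ B} = #A * #B := by
    rw [← smul_eq_mul, ← sum_const, ← sum_congr rfl fun a ha => card_filter_mul_mem (hg a ha) B]
    exact sum_card_bipartiteAbove_eq_sum_card_bipartiteBelow (r := fun t a => t * g a ∈ B)
  obtain ⟨t, -, ht⟩ := exists_le_of_sum_le (s := univ) (f := fun _ => #A * #B)
    (g := fun t => #{a ∈ A | t * g a ∈ B} * Fintype.card G₀) univ_nonempty
    (by rw [sum_const, card_univ, ← sum_mul, hcount, smul_eq_mul, mul_comm])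
  exact ⟨t, ht⟩

end Dilation

theorem sumFree_filter_mul_mem {R : Type*} [Semiring R] [DecidableEq R] (A : Finset ℕ) (t : R)
    {B : Finset R} (hB : ∀ x ∈ B, ∀ y ∈ B, ∀ z ∈ B, x + y ≠ z) :
    SumFree {a ∈ A | t * a ∈ B} := by
  intro x hx y hy z hz hxyz
  simp only [mem_filter] at hx hy hz
  exact hB _ hx.2 _ hy.2 _ hz.2 (by rw [← mul_add, ← Nat.cast_add, hxyz])

def middleThird (k : ℕ) : Finset (ZMod (3 * k + 2)) :=
  (Ioc k (2 * k + 1)).image Nat.cast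

theorem card_middleThird (k : ℕ) : #(middleThird k) = k + 1 := by
  rw [middleThird, card_image_of_injOn, Nat.card_Ioc]
  · omega
  intro m hm n hn hmn
  simp only [coe_Ioc, Set.mem_Ioc] at hm hn
  rwa [ZMod.natCast_eq_natCast_iff', Nat.mod_eq_of_lt (by omega), Nat.mod_eq_of_lt (by omega)]
    at hmn

theorem middleThird_sumFree (k : ℕ) :
    ∀ x ∈ middleThird k, ∀ y ∈ middleThird k, ∀ z ∈ middleThird k, x + y ≠ z := by
  simp only [middleThird, mem_image, mem_Ioc]
  rintro _ ⟨m, hm, rfl⟩ _ ⟨n, hn, rfl⟩ _ ⟨l, hl, rfl⟩ hmnl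
  rw [← Nat.cast_add, ZMod.natCast_eq_natCast_iff', Nat.mod_eq_of_lt (a := l) (by omega)] at hmnl
  rcases lt_or_ge (m + n) (3 * k + 2) with hsmall | hlarge
  · rw [Nat.mod_eq_of_lt hsmall] at hmnl
    omega
  · rw [Nat.mod_eq_sub_mod hlarge, Nat.mod_eq_of_lt (by omega)] at hmnl
    omega

theorem erdos_sum_free (A : Finset ℕ) (hA : ∀ a ∈ A, 0 < a) :
    ∃ S ⊆ A, SumFree S ∧ (A.card : ℚ) / 3 ≤ (S.card : ℚ) := by
  obtain ⟨p, hpA, hp, hp3⟩ :=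
    Nat.forall_exists_prime_gt_and_modEq (A.sup id) (q := 3) (a := 2) (by norm_num) (by norm_num)
  obtain ⟨k, rfl⟩ : ∃ k, p = 3 * k + 2 := ⟨p / 3, by rw [Nat.ModEq] at hp3; omega⟩
  have : Fact (3 * k + 2).Prime := ⟨hp⟩
  have hA0 : ∀ a ∈ A, (a : ZMod (3 * k + 2)) ≠ 0 := fun a ha => by
    rw [Ne, ZMod.natCast_eq_zero_iff]
    exact Nat.not_dvd_of_pos_of_lt (hA a ha) ((le_sup (f := id) ha).trans_lt hpA)
  obtain ⟨t, ht⟩ := exists_mul_card_le_card_filter_mul_mem A Nat.cast hA0 (middleThird k)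
  rw [card_middleThird, ZMod.card] at ht
  refine ⟨_, filter_subset _ A, sumFree_filter_mul_mem A t (middleThird_sumFree k), ?_⟩
  have hthird : #A ≤ #{a ∈ A | t * ((a : ℕ) : ZMod (3 * k + 2)) ∈ middleThird k} * 3 := by
    nlinarith
  rw [div_le_iff₀ three_pos]
  exact_mod_cast hthird
end

section
/- If there exists a finite set A of positive natural numbers with sum-free subset constant δ, then for every n there exists a finite set B of positive natural numbers with |B| ≥ n and sum-free subset constant at most δ. -/
/-!
Fix `M > max A`. The dilations `M ^ i • A` (`i < n`) are pairwise disjoint, since base-`M`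
expansions are unique, so their union `B` has `n * |A|` elements. A sum-free subset of `B` meets
each `M ^ i • A` in the dilation of a sum-free subset of `A`, hence has at most `n * l` elements,
and `δ(B) ≤ n * l / (n * |A|) = δ(A)`.
-/

open Finset

def sumFreeCards (A : Finset ℕ) : Set ℕ := {k | ∃ S ⊆ A, SumFree S ∧ #S = k}

lemma exists_isGreatest_sumFreeCards (B : Finset ℕ) : ∃ m, IsGreatest (sumFreeCards B) m :=
  BddAbove.exists_isGreatest_of_nonempty
    ⟨#B, by rintro _ ⟨S, hSB, -, rfl⟩; exact card_le_card hSB⟩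
    ⟨0, ∅, empty_subset B, by simp [SumFree], card_empty⟩

lemma SumFree.filter_mul_mem {S : Finset ℕ} (hS : SumFree S) (A : Finset ℕ) (d : ℕ) :
    SumFree (A.filter (fun a => d * a ∈ S)) := by
  intro x hx y hy z hz hxyz
  simp only [mem_filter] at hx hy hz
  exact hS _ hx.2 _ hy.2 _ hz.2 (by rw [← mul_add, hxyz])

lemma card_inter_image_mul_le {A S : Finset ℕ} {l : ℕ} (hl : l ∈ upperBounds (sumFreeCards A))
    (hS : SumFree S) (d : ℕ) : #(S ∩ A.image (d * ·)) ≤ l := by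
  have hsub : S ∩ A.image (d * ·) ⊆ (A.filter (fun a => d * a ∈ S)).image (d * ·) := by
    intro x hx
    obtain ⟨hxS, hxA⟩ := mem_inter.1 hx
    obtain ⟨a, ha, rfl⟩ := mem_image.1 hxA
    exact mem_image_of_mem _ (mem_filter.2 ⟨ha, hxS⟩)
  calc #(S ∩ A.image (d * ·)) ≤ #(A.filter (fun a => d * a ∈ S)) :=
        (card_le_card hsub).trans card_image_le
    _ ≤ l := hl ⟨_, filter_subset _ _, hS.filter_mul_mem A d, rfl⟩

lemma mul_mem_upperBounds_sumFreeCards_biUnion {ι : Type*} {A : Finset ℕ} {l : ℕ}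
    (hl : l ∈ upperBounds (sumFreeCards A)) (I : Finset ι) (d : ι → ℕ) :
    #I * l ∈ upperBounds (sumFreeCards (I.biUnion fun i => A.image (d i * ·))) := by
  rintro _ ⟨S, hSB, hS, rfl⟩
  calc #S = #(I.biUnion fun i => S ∩ A.image (d i * ·)) := by
        rw [← inter_biUnion, inter_eq_left.2 hSB]
    _ ≤ #I * l := card_biUnion_le_card_mul _ _ _ fun i _ => card_inter_image_mul_le hl hS (d i)

lemma pow_mul_lt_pow_mul {M a b i j : ℕ} (ha : a < M) (hb : 0 < b) (hij : i < j) :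
    M ^ i * a < M ^ j * b :=
  calc M ^ i * a < M ^ i * M := Nat.mul_lt_mul_of_pos_left ha (pow_pos (by omega) i)
    _ = M ^ (i + 1) := (pow_succ M i).symm
    _ ≤ M ^ j := Nat.pow_le_pow_right (by omega) hij
    _ ≤ M ^ j * b := Nat.le_mul_of_pos_right _ hb

lemma pairwiseDisjoint_image_pow_mul {A : Finset ℕ} {M : ℕ} (hA : ∀ a ∈ A, 0 < a)
    (hAM : ∀ a ∈ A, a < M) (I : Set ℕ) :
    I.PairwiseDisjoint fun i => A.image (M ^ i * ·) := by
  intro i _ j _ hij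
  simp only [Function.onFun, disjoint_left, mem_image]
  rintro _ ⟨a, ha, rfl⟩ ⟨b, hb, hab⟩
  rcases hij.lt_or_gt with hij | hij
  · exact (pow_mul_lt_pow_mul (hAM a ha) (hA b hb) hij).ne' hab
  · exact (pow_mul_lt_pow_mul (hAM b hb) (hA a ha) hij).ne hab

lemma card_biUnion_image_pow_mul {A : Finset ℕ} {M : ℕ} (hA : ∀ a ∈ A, 0 < a)
    (hAM : ∀ a ∈ A, a < M) (n : ℕ) :
    #((range n).biUnion fun i => A.image (M ^ i * ·)) = n * #A := by
  rw [card_biUnion (pairwiseDisjoint_image_pow_mul hA hAM _)]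
  have hinj (i : ℕ) : Set.InjOn (M ^ i * ·) A := fun a ha _ _ hab =>
    Nat.eq_of_mul_eq_mul_left (pow_pos (Nat.zero_lt_of_lt (hAM a ha)) i) hab
  simp [card_image_of_injOn (hinj _)]

lemma natCast_div_le_div_of_le_mul {m k l a : ℕ} (h : m ≤ k * l) :
    (m : ℚ) / (k * a : ℕ) ≤ l / a := by
  rcases Nat.eq_zero_or_pos k with rfl | hk
  · simp [div_nonneg]
  calc (m : ℚ) / (k * a : ℕ) ≤ (k * l : ℕ) / (k * a : ℕ) := by gcongr
    _ = l / a := by push_cast; exact mul_div_mul_left _ _ (by positivity)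

theorem arbitrarily_large_sets (A : Finset ℕ) (hA : ∀ a ∈ A, 0 < a)
    (hne : A.Nonempty)
    (l : ℕ) (hl : IsGreatest {n : ℕ | ∃ S ⊆ A, SumFree S ∧ S.card = n} l)
    (n : ℕ) :
    ∃ B : Finset ℕ, (∀ b ∈ B, 0 < b) ∧ n ≤ B.card ∧
      ∃ m : ℕ, IsGreatest {k : ℕ | ∃ S ⊆ B, SumFree S ∧ S.card = k} m ∧
        (m : ℚ) / (B.card : ℚ) ≤ (l : ℚ) / (A.card : ℚ) := by
  have hAM : ∀ a ∈ A, a < A.sup id + 1 := fun a ha => Nat.lt_succ_of_le (le_sup (f := id) ha)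
  set B := (range n).biUnion fun i => A.image ((A.sup id + 1) ^ i * ·)
  have hB : #B = n * #A := card_biUnion_image_pow_mul hA hAM n
  obtain ⟨m, hm⟩ := exists_isGreatest_sumFreeCards B
  refine ⟨B, ?_, hB ▸ Nat.le_mul_of_pos_right n hne.card_pos, m, hm, ?_⟩
  · simp only [B, mem_biUnion, mem_image]
    rintro _ ⟨i, -, a, ha, rfl⟩
    exact Nat.mul_pos (by positivity) (hA a ha)
  · have hmB : m ≤ n * l := by
      simpa using mul_mem_upperBounds_sumFreeCards_biUnion hl.2 (range n) _ hm.1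
    rw [hB]
    exact natCast_div_le_div_of_le_mul hmB
end

section
/- Let A = {1,...,18,20,22,24,25,26,27,30,34,50,54} (the 28-element set of the paper) and B = {1,2,4,3,6,12,5,10,20}. If S ⊆ A is sum-free with |S| = 12, then 2 ≤ |S ∩ B| ≤ 5. -/
instance : DecidablePred SumFree := fun S => by unfold SumFree; infer_instance

open Finset

theorem SumFree.mono {S T : Finset ℕ} (hT : SumFree T) (hST : S ⊆ T) : SumFree S :=
  fun x hx y hy z hz => hT x (hST hx) y (hST hy) z (hST hz)

theorem SumFree.two_mul_notMem {S : Finset ℕ} (hS : SumFree S) {a : ℕ} (ha : a ∈ S) :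
    2 * a ∉ S :=
  fun h2a => hS a ha a ha (2 * a) h2a (two_mul a).symm

theorem SumFree.card_le_of_forall_mem_doubling {S t : Finset ℕ} (hS : SumFree S)
    (hcover : ∀ x ∈ S, ∃ a ∈ t, x = a ∨ x = 2 * a) : #S ≤ #t := by
  refine card_le_card_of_forall_subsingleton (fun x a => x = a ∨ x = 2 * a) hcover ?_
  rintro a - x ⟨hxS, hx⟩ y ⟨hyS, hy⟩
  rcases hx with rfl | rfl <;> rcases hy with rfl | rfl
  exacts [rfl, absurd hyS (hS.two_mul_notMem hxS), absurd hxS (hS.two_mul_notMem hyS), rfl]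

set_option maxRecDepth 20000 in
theorem card_le_five_of_sumFree_of_subset {T : Finset ℕ}
    (hT : T ⊆ ({1,2,4,3,6,12,5,10,20} : Finset ℕ)) (hsf : SumFree T) : #T ≤ 5 := by
  have key : ∀ T ∈ ({1,2,4,3,6,12,5,10,20} : Finset ℕ).powerset, SumFree T → #T ≤ 5 := by
    decide
  exact key T (mem_powerset.mpr hT) hsf

theorem intersection_with_B (S : Finset ℕ)
    (hS : S ⊆ ({1,2,3,4,5,6,7,8,9,10,11,12,13,14,15,16,17,18,20,22,24,25,26,27,30,34,50,54} : Finset ℕ)) (hsf : SumFree S) (hcard : S.card = 12) :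
    2 ≤ (S ∩ ({1,2,4,3,6,12,5,10,20} : Finset ℕ)).card ∧
    (S ∩ ({1,2,4,3,6,12,5,10,20} : Finset ℕ)).card ≤ 5 := by
  set B : Finset ℕ := {1,2,4,3,6,12,5,10,20} with hB
  have houtside : #(S \ B) ≤ 10 := by
    refine (hsf.mono sdiff_subset).card_le_of_forall_mem_doubling
      (t := {7,8,9,11,12,13,15,17,25,27}) fun x hx => ?_
    have hxA := hS (mem_sdiff.mp hx).1
    have hxB := (mem_sdiff.mp hx).2
    simp only [hB, mem_insert, mem_singleton, exists_eq_or_imp, exists_eq_left] at hxA hxB ⊢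
    omega
  have hsplit := card_sdiff_add_card_inter S B
  refine ⟨?_, card_le_five_of_sumFree_of_subset inter_subset_right (hsf.mono inter_subset_left)⟩
  omega
end

section
/- No sum-free subset S of A = {1,...,18,20,22,24,25,26,27,30,34,50,54} with |S| = 12 satisfies S ∩ {1,2,4,3,6,12,5,10,20} = {1,5,20} together with 24 ∈ S. -/
set_option maxHeartbeats 1000000

theorem case_C_1_5_20 (S : Finset ℕ)
    (hS : S ⊆ ({1,2,3,4,5,6,7,8,9,10,11,12,13,14,15,16,17,18,20,22,24,25,26,27,30,34,50,54} : Finset ℕ)) (hsf : SumFree S) (hcard : S.card = 12) :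
    ¬ (S ∩ ({1,2,4,3,6,12,5,10,20} : Finset ℕ) = ({1,5,20} : Finset ℕ) ∧ 24 ∈ S) := by
  rintro ⟨h1, h24⟩
  have hmem : ∀ a : ℕ, a ∈ ({1,5,20} : Finset ℕ) → a ∈ S := by
    intro a ha
    have : a ∈ S ∩ ({1,2,4,3,6,12,5,10,20} : Finset ℕ) := h1 ▸ ha
    exact (Finset.mem_inter.mp this).1
  have hin1 : (1:ℕ) ∈ S := hmem 1 (by decide)
  have hin5 : (5:ℕ) ∈ S := hmem 5 (by decide)
  have hin20 : (20:ℕ) ∈ S := hmem 20 (by decide)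
  have hnot : ∀ a : ℕ, a ∈ ({2,3,4,6,10,12} : Finset ℕ) → a ∉ S := by
    intro a ha haS
    have h2 : a ∈ S ∩ ({1,2,4,3,6,12,5,10,20} : Finset ℕ) := by
      refine Finset.mem_inter.mpr ⟨haS, ?_⟩
      fin_cases ha <;> decide
    rw [h1] at h2
    fin_cases ha <;> simp_all
  have h15 : (15:ℕ) ∉ S := fun h => hsf 5 hin5 15 h 20 hin20 rfl
  have h25 : (25:ℕ) ∉ S := fun h => hsf 5 hin5 20 hin20 25 h rfl
  -- group bounds
  have hG1 : (S ∩ ({7,8,9,11,16} : Finset ℕ)).card ≤ 2 := by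
    by_contra hc
    push_neg at hc
    obtain ⟨U, hU, hUc⟩ := Finset.exists_subset_card_eq hc
    have hU1 : U ∈ (({7,8,9,11,16} : Finset ℕ)).powersetCard 3 :=
      Finset.mem_powersetCard.mpr ⟨hU.trans Finset.inter_subset_right, hUc⟩
    have hUS : U ⊆ S := hU.trans Finset.inter_subset_left
    fin_cases hU1 <;>
    · simp only [Function.comp_apply, Finset.subset_iff, Finset.mem_mk, Multiset.mem_coe,
        List.mem_cons, List.not_mem_nil, or_false, forall_eq_or_imp, forall_eq] at hUS
      obtain ⟨m1, m2, m3⟩ := hUS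
      first
      | exact hsf _ m1 _ hin1 _ m2 rfl
      | exact hsf _ m1 _ m1 _ m3 rfl
      | exact hsf _ m1 _ m2 _ hin20 rfl
      | exact hsf _ m1 _ m2 _ m3 rfl
      | exact hsf _ m2 _ hin5 _ m3 rfl
      | exact hsf _ m2 _ m3 _ hin20 rfl
  have hG2 : (S ∩ ({13,14,17,18,34} : Finset ℕ)).card ≤ 2 := by
    by_contra hc
    push_neg at hc
    obtain ⟨U, hU, hUc⟩ := Finset.exists_subset_card_eq hc
    have hU1 : U ∈ (({13,14,17,18,34} : Finset ℕ)).powersetCard 3 :=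
      Finset.mem_powersetCard.mpr ⟨hU.trans Finset.inter_subset_right, hUc⟩
    have hUS : U ⊆ S := hU.trans Finset.inter_subset_left
    fin_cases hU1 <;>
    · simp only [Function.comp_apply, Finset.subset_iff, Finset.mem_mk, Multiset.mem_coe,
        List.mem_cons, List.not_mem_nil, or_false, forall_eq_or_imp, forall_eq] at hUS
      obtain ⟨m1, m2, m3⟩ := hUS
      first
      | exact hsf _ m1 _ hin1 _ m2 rfl
      | exact hsf _ m1 _ hin20 _ m3 rfl
      | exact hsf _ m1 _ hin5 _ m2 rfl
      | exact hsf _ m1 _ hin5 _ m3 rfl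
      | exact hsf _ m1 _ m1 _ m3 rfl
      | exact hsf _ m2 _ hin1 _ m3 rfl
      | exact hsf _ m2 _ m2 _ m3 rfl
  have hG3 : (S ∩ ({22,26,27,30,50,54} : Finset ℕ)).card ≤ 3 := by
    by_contra hc
    push_neg at hc
    obtain ⟨U, hU, hUc⟩ := Finset.exists_subset_card_eq hc
    have hU1 : U ∈ (({22,26,27,30,50,54} : Finset ℕ)).powersetCard 4 :=
      Finset.mem_powersetCard.mpr ⟨hU.trans Finset.inter_subset_right, hUc⟩
    have hUS : U ⊆ S := hU.trans Finset.inter_subset_left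
    fin_cases hU1 <;>
    · simp only [Function.comp_apply, Finset.subset_iff, Finset.mem_mk, Multiset.mem_coe,
        List.mem_cons, List.not_mem_nil, or_false, forall_eq_or_imp, forall_eq] at hUS
      obtain ⟨m1, m2, m3, m4⟩ := hUS
      first
      | exact hsf _ m1 _ h24 _ m3 rfl
      | exact hsf _ m1 _ hin1 _ m2 rfl
      | exact hsf _ m1 _ hin5 _ m2 rfl
      | exact hsf _ m1 _ hin5 _ m3 rfl
      | exact hsf _ m1 _ m1 _ m4 rfl
      | exact hsf _ m2 _ h24 _ m3 rfl
      | exact hsf _ m2 _ h24 _ m4 rfl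
      | exact hsf _ m2 _ hin20 _ m3 rfl
      | exact hsf _ m3 _ h24 _ m4 rfl
  -- covering
  have hcover : S ⊆ ({1,5,20,24} : Finset ℕ) ∪ ({7,8,9,11,16} : Finset ℕ)
      ∪ ({13,14,17,18,34} : Finset ℕ) ∪ ({22,26,27,30,50,54} : Finset ℕ) := by
    intro x hx
    have hxA := hS hx
    have n2 : x ≠ 2 := fun h => hnot 2 (by decide) (h ▸ hx)
    have n3 : x ≠ 3 := fun h => hnot 3 (by decide) (h ▸ hx)
    have n4 : x ≠ 4 := fun h => hnot 4 (by decide) (h ▸ hx)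
    have n6 : x ≠ 6 := fun h => hnot 6 (by decide) (h ▸ hx)
    have n10 : x ≠ 10 := fun h => hnot 10 (by decide) (h ▸ hx)
    have n12 : x ≠ 12 := fun h => hnot 12 (by decide) (h ▸ hx)
    have n15 : x ≠ 15 := fun h => h15 (h ▸ hx)
    have n25 : x ≠ 25 := fun h => h25 (h ▸ hx)
    simp only [Finset.mem_union, Finset.mem_insert, Finset.mem_singleton] at hxA ⊢
    omega
  have hcount : S.card ≤ 11 := by
    have e : S = S ∩ (({1,5,20,24} : Finset ℕ) ∪ ({7,8,9,11,16} : Finset ℕ)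
        ∪ ({13,14,17,18,34} : Finset ℕ) ∪ ({22,26,27,30,50,54} : Finset ℕ)) :=
      (Finset.inter_eq_left.mpr hcover).symm
    rw [e, Finset.inter_union_distrib_left, Finset.inter_union_distrib_left,
      Finset.inter_union_distrib_left]
    have hK : (S ∩ ({1,5,20,24} : Finset ℕ)).card ≤ 4 :=
      le_trans (Finset.card_le_card Finset.inter_subset_right) (by decide)
    calc (S ∩ ({1,5,20,24} : Finset ℕ) ∪ S ∩ ({7,8,9,11,16} : Finset ℕ)
          ∪ S ∩ ({13,14,17,18,34} : Finset ℕ) ∪ S ∩ ({22,26,27,30,50,54} : Finset ℕ)).card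
        ≤ (S ∩ ({1,5,20,24} : Finset ℕ) ∪ S ∩ ({7,8,9,11,16} : Finset ℕ)
          ∪ S ∩ ({13,14,17,18,34} : Finset ℕ)).card + (S ∩ ({22,26,27,30,50,54} : Finset ℕ)).card :=
          Finset.card_union_le _ _
      _ ≤ (S ∩ ({1,5,20,24} : Finset ℕ) ∪ S ∩ ({7,8,9,11,16} : Finset ℕ)).card
          + (S ∩ ({13,14,17,18,34} : Finset ℕ)).card + (S ∩ ({22,26,27,30,50,54} : Finset ℕ)).card := by
          have := Finset.card_union_le (S ∩ ({1,5,20,24} : Finset ℕ) ∪ S ∩ ({7,8,9,11,16} : Finset ℕ))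
            (S ∩ ({13,14,17,18,34} : Finset ℕ))
          omega
      _ ≤ (S ∩ ({1,5,20,24} : Finset ℕ)).card + (S ∩ ({7,8,9,11,16} : Finset ℕ)).card
          + (S ∩ ({13,14,17,18,34} : Finset ℕ)).card + (S ∩ ({22,26,27,30,50,54} : Finset ℕ)).card := by
          have := Finset.card_union_le (S ∩ ({1,5,20,24} : Finset ℕ)) (S ∩ ({7,8,9,11,16} : Finset ℕ))
          omega
      _ ≤ 11 := by omega
  omega
end

section
/- If S is a sum-free subset of A = {1,...,18,20,22,24,25,26,27,30,34,50,54} with |S| = 12 and 24 ∈ S, then 2 ∉ S. -/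
lemma sumFree_subset {S T : Finset ℕ} (h : T ⊆ S) (hS : SumFree S) : SumFree T :=
  fun x hx y hy z hz => hS x (h hx) y (h hy) z (h hz)

set_option maxRecDepth 100000 in
lemma block1 : ∀ T ∈ ({3,5,15,17,20,25,27,30,34,50,54} : Finset ℕ).powersetCard 6,
    ¬(∀ x ∈ T ∪ {2,24}, ∀ y ∈ T ∪ {2,24}, ∀ z ∈ T ∪ {2,24}, x + y ≠ z) := by
  decide

set_option maxRecDepth 100000 in
lemma block2 : ∀ T ∈ ({6,7,8,9,10,12,14,16,18,22,26} : Finset ℕ).powersetCard 4,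
    ¬(∀ x ∈ T ∪ {2,24}, ∀ y ∈ T ∪ {2,24}, ∀ z ∈ T ∪ {2,24}, x + y ≠ z) := by
  decide

set_option maxRecDepth 100000 in
lemma block3 : ∀ T ∈ ({1,4,11,13} : Finset ℕ).powersetCard 2,
    ¬(∀ x ∈ T ∪ {2,24}, ∀ y ∈ T ∪ {2,24}, ∀ z ∈ T ∪ {2,24}, x + y ≠ z) := by
  decide

set_option maxHeartbeats 1000000 in
theorem two_not_in_S (S : Finset ℕ)
    (hS : S ⊆ ({1,2,3,4,5,6,7,8,9,10,11,12,13,14,15,16,17,18,20,22,24,25,26,27,30,34,50,54} : Finset ℕ)) (hsf : SumFree S) (hcard : S.card = 12) (h24 : 24 ∈ S) :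
    2 ∉ S := by
  intro h2
  have key : ∀ (B : Finset ℕ) (k : ℕ),
      (∀ T ∈ B.powersetCard k,
        ¬(∀ x ∈ T ∪ {2,24}, ∀ y ∈ T ∪ {2,24}, ∀ z ∈ T ∪ {2,24}, x + y ≠ z))
      → (S ∩ B).card ≤ k - 1 := by
    intro B k hB
    by_contra hc
    push_neg at hc
    have hk : k ≤ (S ∩ B).card := by omega
    obtain ⟨T, hTsub, hTcard⟩ := Finset.exists_subset_card_eq hk
    have hTB : T ∈ B.powersetCard k :=
      Finset.mem_powersetCard.2 ⟨hTsub.trans Finset.inter_subset_right, hTcard⟩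
    apply hB T hTB
    have hsub2 : T ∪ ({2,24} : Finset ℕ) ⊆ S := by
      intro x hx
      rcases Finset.mem_union.1 hx with h | h
      · exact (Finset.mem_inter.1 (hTsub h)).1
      · rcases Finset.mem_insert.1 h with rfl | h
        · exact h2
        · rw [Finset.mem_singleton.1 h]; exact h24
    exact sumFree_subset hsub2 hsf
  have c1 := key _ 6 block1
  have c2 := key _ 4 block2
  have c3 := key _ 2 block3
  set B1 : Finset ℕ := {3,5,15,17,20,25,27,30,34,50,54}
  set B2 : Finset ℕ := {6,7,8,9,10,12,14,16,18,22,26}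
  set B3 : Finset ℕ := {1,4,11,13}
  have hA : ({1,2,3,4,5,6,7,8,9,10,11,12,13,14,15,16,17,18,20,22,24,25,26,27,30,34,50,54} : Finset ℕ) ⊆ B1 ∪ B2 ∪ B3 ∪ ({2,24} : Finset ℕ) := by decide
  have hsub : S ⊆ (S ∩ B1) ∪ (S ∩ B2) ∪ (S ∩ B3) ∪ ({2,24} : Finset ℕ) := by
    intro x hx
    have hxA := hA (hS hx)
    simp only [Finset.mem_union] at hxA ⊢
    rcases hxA with ((h | h) | h) | h
    · exact Or.inl (Or.inl (Or.inl (Finset.mem_inter.2 ⟨hx, h⟩)))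
    · exact Or.inl (Or.inl (Or.inr (Finset.mem_inter.2 ⟨hx, h⟩)))
    · exact Or.inl (Or.inr (Finset.mem_inter.2 ⟨hx, h⟩))
    · exact Or.inr h
  have hc := Finset.card_le_card hsub
  have h4 := Finset.card_union_le ((S ∩ B1) ∪ (S ∩ B2) ∪ (S ∩ B3)) ({2,24} : Finset ℕ)
  have h5 := Finset.card_union_le ((S ∩ B1) ∪ (S ∩ B2)) (S ∩ B3)
  have h6 := Finset.card_union_le (S ∩ B1) (S ∩ B2)
  have h7 : ({2,24} : Finset ℕ).card ≤ 2 := by decide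
  omega
end
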